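/- If S is a simple injective non-projective right R-module, then Hom_R(S, R) = 0 and the subprojectivity domain of S equals the class of modules with no direct summand isomorphic to S. -/

import Mathlib

/-! An injective map out of the injective module `S` splits, so for simple `S` every nonzero map
`S → N` exhibits `S` as a summand of `N`. A summand of a projective module is projective, hence `S`
is not a summand of `R`, and `Hom(S, R) = 0`. If `S` is a summand of `N` and `S` is `N`-subprojective,
lifting the inclusion through a free cover of `N` makes `S` a summand of a free module, which is
impossible; if `S` is not a summand of `N`, then `Hom(S, N) = 0` and lifting is trivial. -/

/-- `M` is `N`-subprojective: every homomorphism `M → N` lifts through every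
epimorphism onto `N`. -/
def Subprojective (R : Type) [Ring R] (M N : Type) [AddCommGroup M] [Module R M]
    [AddCommGroup N] [Module R N] : Prop :=
  ∀ (B : Type) [AddCommGroup B] [Module R B] (g : B →ₗ[R] N),
    Function.Surjective g → ∀ f : M →ₗ[R] N, ∃ h : M →ₗ[R] B, g ∘ₗ h = f

/-- `S` is isomorphic to a direct summand of `K`: there is a split injection `S → K`. -/
def HasSummandIso (R : Type) [Ring R] (S K : Type) [AddCommGroup S] [Module R S]
    [AddCommGroup K] [Module R K] : Prop :=
  ∃ (i : S →ₗ[R] K) (p : K →ₗ[R] S), p ∘ₗ i = LinearMap.id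

section

variable {R : Type} [Ring R] {S N : Type} [AddCommGroup S] [Module R S]
  [AddCommGroup N] [Module R N]

theorem hasSummandIso_of_injective [Module.Injective R S] {f : S →ₗ[R] N}
    (hf : Function.Injective f) : HasSummandIso R S N := by
  obtain ⟨p, hp⟩ := Module.Injective.out f hf (LinearMap.id : S →ₗ[R] S)
  exact ⟨f, p, LinearMap.ext hp⟩

theorem eq_zero_of_not_hasSummandIso [IsSimpleModule R S] [Module.Injective R S]
    (hN : ¬ HasSummandIso R S N) (f : S →ₗ[R] N) : f = 0 :=
  f.injective_or_eq_zero.resolve_left fun hf => hN (hasSummandIso_of_injective hf)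

theorem Module.Projective.of_hasSummandIso [Module.Projective R N]
    (h : HasSummandIso R S N) : Module.Projective R S := by
  obtain ⟨i, p, hpi⟩ := h
  exact Module.Projective.of_split i p hpi

theorem Module.Projective.of_subprojective_of_hasSummandIso (hsub : Subprojective R S N)
    (h : HasSummandIso R S N) : Module.Projective R S := by
  obtain ⟨i, p, hpi⟩ := h
  obtain ⟨j, hj⟩ := hsub (N →₀ R) (Finsupp.linearCombination R id)
    (Finsupp.linearCombination_id_surjective R N) i
  refine Module.Projective.of_hasSummandIso ⟨j, p ∘ₗ Finsupp.linearCombination R id, ?_⟩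
  rw [LinearMap.comp_assoc, hj, hpi]

theorem subprojective_of_forall_eq_zero (h : ∀ f : S →ₗ[R] N, f = 0) :
    Subprojective R S N := by
  intro B _ _ g _ f
  exact ⟨0, by rw [h f, LinearMap.comp_zero]⟩

end

theorem stmt_16 (R : Type) [Ring R] (S : Type) [AddCommGroup S] [Module R S]
    [IsSimpleModule R S] [Module.Injective R S] (hnp : ¬ Module.Projective R S) :
    (∀ f : S →ₗ[R] R, f = 0) ∧
      ∀ (N : Type) (_ : AddCommGroup N) (_ : Module R N),
        Subprojective R S N ↔ ¬ HasSummandIso R S N := by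
  refine ⟨eq_zero_of_not_hasSummandIso fun h => hnp (.of_hasSummandIso h),
    fun N _ _ => ⟨fun hsub h => hnp (.of_subprojective_of_hasSummandIso hsub h), fun hN => ?_⟩⟩
  exact subprojective_of_forall_eq_zero (eq_zero_of_not_hasSummandIso hN)
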